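/- arXiv:0911.4697 — 3 statements merged into one kernel-verified Lean document; each statement's English description precedes it below -/
import Mathlib

section
/- If v is a simplicial vertex of a clutter C (with d ≥ 2) such that C\v has at least one d-non-circuit, then v is a shedding vertex of the Alexander dual of the independence complex of c_d(C). -/
variable {ι : Type*} [DecidableEq ι]

/-- A clutter: an antichain of finite sets (no circuit properly contains another). -/
def IsClutter (C : Set (Finset ι)) : Prop :=
  ∀ e₁ ∈ C, ∀ e₂ ∈ C, e₁ ⊆ e₂ → e₁ = e₂

/-- The independence complex of the clutter with circuit set `C` on ground set `V`:
faces are the subsets of `V` containing no circuit. -/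
def indepOn (V : Finset ι) (C : Set (Finset ι)) : Set (Finset ι) :=
  {σ | σ ⊆ V ∧ ∀ e ∈ C, ¬ e ⊆ σ}

/-- The minimal members of a family of finite sets. -/
def minimalSets (S : Set (Finset ι)) : Set (Finset ι) :=
  {e | e ∈ S ∧ ∀ f ∈ S, f ⊆ e → f = e}

/-- Deletion of a vertex from a clutter: keep the circuits avoiding `v`. -/
def clDel (C : Set (Finset ι)) (v : ι) : Set (Finset ι) :=
  {e | e ∈ C ∧ v ∉ e}

/-- Contraction of a vertex in a clutter: minimal sets among `{e \ {v}}`. -/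
def clCon (C : Set (Finset ι)) (v : ι) : Set (Finset ι) :=
  minimalSets ((fun e => e.erase v) '' C)

/-- A simplicial complex: a family of finite sets closed under taking subsets. -/
def IsComplex (Δ : Set (Finset ι)) : Prop :=
  ∀ σ ∈ Δ, ∀ τ, τ ⊆ σ → τ ∈ Δ

/-- The link of a face `σ`. -/
def link (Δ : Set (Finset ι)) (σ : Finset ι) : Set (Finset ι) :=
  {τ | Disjoint τ σ ∧ τ ∪ σ ∈ Δ}

/-- The face-deletion `Δ \ σ`: faces of `Δ` not containing `σ`. -/
def delFace (Δ : Set (Finset ι)) (σ : Finset ι) : Set (Finset ι) :=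
  {τ | τ ∈ Δ ∧ ¬ σ ⊆ τ}

/-- The star of a face `σ`, as a subcomplex. -/
def starC (Δ : Set (Finset ι)) (σ : Finset ι) : Set (Finset ι) :=
  {τ | τ ∈ Δ ∧ τ ∪ σ ∈ Δ}

/-- A facet: a maximal face. -/
def IsFacet (Δ : Set (Finset ι)) (σ : Finset ι) : Prop :=
  σ ∈ Δ ∧ ∀ τ ∈ Δ, σ ⊆ τ → σ = τ

/-- A shedding face: every face `τ` of the star of `σ` satisfies the exchange property:
for every `v ∈ σ` there is `w ∉ τ` with `(τ ∪ {w}) \ {v}` a face. -/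
def SheddingFace (Δ : Set (Finset ι)) (σ : Finset ι) : Prop :=
  ∀ τ ∈ Δ, σ ⊆ τ → ∀ v ∈ σ, ∃ w, w ∉ τ ∧ (insert w τ).erase v ∈ Δ

/-- Shellability (Björner–Wachs form): an ordering `f 0, f 1, …` of the facets such
that for all `i < j` there are `k < j` and `x ∈ f j` with
`f i ∩ f j ⊆ f k ∩ f j = f j \ {x}`. -/
def Shellable (Δ : Set (Finset ι)) : Prop :=
  ∃ (m : ℕ) (f : Fin m → Finset ι),
    Function.Injective f ∧
    (∀ σ, IsFacet Δ σ ↔ ∃ i, f i = σ) ∧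
    ∀ i j : Fin m, i < j →
      ∃ k, k < j ∧ ∃ x ∈ f j, f i ∩ f j ⊆ f k ∩ f j ∧ f k ∩ f j = (f j).erase x

/-- `k`-decomposability (for possibly non-pure complexes): a complex is
`k`-decomposable if it is a simplex (or degenerate), or has a shedding face of
dimension at most `k` whose deletion and link are both `k`-decomposable. -/
inductive KDecomposable : ℤ → Set (Finset ι) → Prop
  | of_empty (k : ℤ) : KDecomposable k ∅
  | of_simplex (k : ℤ) (σ : Finset ι) : KDecomposable k {τ | τ ⊆ σ}
  | of_shed (k : ℤ) (Δ : Set (Finset ι)) (σ : Finset ι) (hσ : σ ∈ Δ)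
      (hne : σ.Nonempty) (hdim : (σ.card : ℤ) ≤ k + 1)
      (hshed : SheddingFace Δ σ)
      (h₁ : KDecomposable k (delFace Δ σ)) (h₂ : KDecomposable k (link Δ σ)) :
      KDecomposable k Δ

/-- A simplicial vertex of a clutter: any two distinct circuits `e₁, e₂` containing `v`
admit a third circuit `e₃ ⊆ (e₁ ∪ e₂) \ {v}`. -/
def SimplicialVertex (C : Set (Finset ι)) (v : ι) : Prop :=
  ∀ e₁ ∈ C, ∀ e₂ ∈ C, e₁ ≠ e₂ → v ∈ e₁ → v ∈ e₂ →
    ∃ e₃ ∈ C, e₃ ⊆ (e₁ ∪ e₂).erase v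

/-- Minors of a clutter (with ground set): obtained by repeated deletions and contractions. -/
inductive Minor : Finset ι → Set (Finset ι) → Finset ι → Set (Finset ι) → Prop
  | refl (V : Finset ι) (C : Set (Finset ι)) : Minor V C V C
  | del {V C W D} (v : ι) (hv : v ∈ W) (h : Minor V C W D) :
      Minor V C (W.erase v) (clDel D v)
  | con {V C W D} (v : ι) (hv : v ∈ W) (h : Minor V C W D) :
      Minor V C (W.erase v) (clCon D v)

/-- Contractions of a clutter (with ground set): obtained by repeated contractions. -/
inductive ConMinor : Finset ι → Set (Finset ι) → Finset ι → Set (Finset ι) → Prop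
  | refl (V : Finset ι) (C : Set (Finset ι)) : ConMinor V C V C
  | con {V C W D} (v : ι) (hv : v ∈ W) (h : ConMinor V C W D) :
      ConMinor V C (W.erase v) (clCon D v)

/-- A clutter is chordal if every minor with at least one vertex has a simplicial vertex. -/
def Chordal (V : Finset ι) (C : Set (Finset ι)) : Prop :=
  ∀ W D, Minor V C W D → W.Nonempty → ∃ v ∈ W, SimplicialVertex D v

/-- Clutter of minimal non-faces of a complex `Δ` on ground set `V`. -/
def nonfaceClutter (V : Finset ι) (Δ : Set (Finset ι)) : Set (Finset ι) :=
  {e | e ⊆ V ∧ e ∉ Δ ∧ ∀ e', e' ⊂ e → e' ∈ Δ}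

/-- `cNon V C d`: the `d`-non-circuits of `C`, i.e. the `d`-subsets of `V`
that are not circuits of `C`. -/
def cNon (V : Finset ι) (C : Set (Finset ι)) (d : ℕ) : Set (Finset ι) :=
  {e | e ⊆ V ∧ e.card = d ∧ e ∉ C}

/-- Combinatorial Alexander dual of a complex on ground set `V`. -/
def alexDual (V : Finset ι) (Δ : Set (Finset ι)) : Set (Finset ι) :=
  {σ | σ ⊆ V ∧ V \ σ ∉ Δ}

/-- Join of two complexes. -/
def joinC (Δ₁ Δ₂ : Set (Finset ι)) : Set (Finset ι) :=
  {σ | ∃ σ₁ ∈ Δ₁, ∃ σ₂ ∈ Δ₂, σ = σ₁ ∪ σ₂}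

/-- if `v` is a simplicial vertex of `C` (with `d ≥ 2`) and `C\v`
has a `d`-non-circuit, then `v` is a shedding vertex of `I(c_d(C))^∨`. -/
theorem stmt17 [Fintype ι] (V : Finset ι) (C : Set (Finset ι)) (hC : IsClutter C)
    (hCV : ∀ e ∈ C, e ⊆ V) (d : ℕ) (hd : 2 ≤ d)
    (v : ι) (hv : v ∈ V) (hs : SimplicialVertex C v)
    (hnc : ∃ e : Finset ι, e ⊆ V.erase v ∧ e.card = d ∧ e ∉ C) :
    SheddingFace (alexDual V (indepOn V (cNon V C d))) {v} := by
  intro τ hτ hvτ u hu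
  rw [Finset.mem_singleton] at hu
  obtain rfl := hu.symm
  obtain ⟨hτV, hS⟩ := hτ
  have hvτ' : v ∈ τ := hvτ (Finset.mem_singleton_self v)
  -- extract a d-non-circuit inside V \ τ
  have hex : ∃ e, e ⊆ V \ τ ∧ e.card = d ∧ e ∉ C := by
    by_contra h
    push_neg at h
    exact hS ⟨Finset.sdiff_subset, fun e he hsub => he.2.2 (h e hsub he.2.1)⟩
  obtain ⟨e, heS, hecard, heC⟩ := hex
  have heV : e ⊆ V := heS.trans Finset.sdiff_subset
  have hve : v ∉ e := fun h => (Finset.mem_sdiff.mp (heS h)).2 hvτ'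
  -- claim: there is w ∈ e with insert v (e.erase w) ∉ C
  have claim : ∃ w ∈ e, insert v (e.erase w) ∉ C := by
    by_contra h
    push_neg at h
    obtain ⟨w₁, hw₁, w₂, hw₂, hne⟩ : ∃ a ∈ e, ∃ b ∈ e, a ≠ b :=
      Finset.one_lt_card.mp (by omega)
    set f₁ := insert v (e.erase w₁) with hf₁
    set f₂ := insert v (e.erase w₂) with hf₂
    have hvne : ∀ x ∈ e, x ≠ v := fun x hx hxv => hve (hxv ▸ hx)
    have hfne : f₁ ≠ f₂ := by
      intro hEq
      have : w₂ ∈ f₁ := Finset.mem_insert_of_mem (Finset.mem_erase.mpr ⟨hne.symm, hw₂⟩)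
      rw [hEq] at this
      rcases Finset.mem_insert.mp this with h' | h'
      · exact hvne w₂ hw₂ h'
      · exact (Finset.mem_erase.mp h').1 rfl
    obtain ⟨e₃, he₃C, he₃sub⟩ :=
      hs f₁ (h w₁ hw₁) f₂ (h w₂ hw₂) hfne (Finset.mem_insert_self v _)
        (Finset.mem_insert_self v _)
    have he₃e : e₃ ⊆ e := by
      intro x hx
      have hx' := he₃sub hx
      rw [Finset.mem_erase, Finset.mem_union] at hx'
      rcases hx'.2 with h' | h' <;>
        [rcases Finset.mem_insert.mp h' with h'' | h'';
         rcases Finset.mem_insert.mp h' with h'' | h''] <;>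
        first
          | exact absurd h'' hx'.1
          | exact Finset.mem_of_mem_erase h''
    have hvne₃ : v ∉ e₃ := fun h' => hve (he₃e h')
    by_cases heq : e₃ = e
    · exact heC (heq ▸ he₃C)
    · obtain ⟨w, hwe, hwne₃⟩ := Finset.exists_of_ssubset (ssubset_of_subset_of_ne he₃e heq)
      have hsub : e₃ ⊆ insert v (e.erase w) := by
        intro x hx
        exact Finset.mem_insert_of_mem
          (Finset.mem_erase.mpr ⟨fun h' => hwne₃ (h' ▸ hx), he₃e hx⟩)
      have := hC e₃ he₃C _ (h w hwe) hsub
      exact hvne₃ (this ▸ Finset.mem_insert_self v _)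
  obtain ⟨w, hwe, hwC⟩ := claim
  have hwS := Finset.mem_sdiff.mp (heS hwe)
  refine ⟨w, hwS.2, ?_, ?_⟩
  · intro x hx
    have := Finset.mem_of_mem_erase hx
    rcases Finset.mem_insert.mp this with h' | h'
    · exact h' ▸ hwS.1
    · exact hτV h'
  · -- V \ ((insert w τ).erase v) is not independent
    intro ⟨_, hind⟩
    have hwv : v ≠ w := fun h' => hve (h' ▸ hwe)
    refine hind (insert v (e.erase w)) ⟨?_, ?_, hwC⟩ ?_
    · intro x hx
      rcases Finset.mem_insert.mp hx with h' | h'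
      · exact h' ▸ hv
      · exact heV (Finset.mem_of_mem_erase h')
    · rw [Finset.card_insert_of_notMem (fun h' => hve (Finset.mem_of_mem_erase h')),
        Finset.card_erase_of_mem hwe, hecard]
      omega
    · intro x hx
      rw [Finset.mem_sdiff]
      rcases Finset.mem_insert.mp hx with h' | h'
      · rw [h']; exact ⟨hv, Finset.notMem_erase v _⟩
      · obtain ⟨hxw, hxe⟩ := Finset.mem_erase.mp h'
        have hx' := Finset.mem_sdiff.mp (heS hxe)
        refine ⟨hx'.1, fun hmem => ?_⟩
        have := Finset.mem_of_mem_erase hmem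
        rcases Finset.mem_insert.mp this with h'' | h''
        · exact hxw h''
        · exact hx'.2 h''
end

section
/- If C is a chordal clutter with minimum circuit cardinality d, then the Alexander dual of the independence complex of c_d(C) is vertex decomposable. -/
variable {ι : Type*} [DecidableEq ι]

/-- The union of the simplices on `W \ e`, over `d`-subsets `e` of `W` not in `D`. -/
def SC (W : Finset ι) (D : Set (Finset ι)) (d : ℕ) : Set (Finset ι) :=
  {σ | σ ⊆ W ∧ ∃ e, e ⊆ W \ σ ∧ e.card = d ∧ e ∉ D}

lemma minor_trans {V W X : Finset ι} {C D E : Set (Finset ι)}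
    (h1 : Minor V C W D) (h2 : Minor W D X E) : Minor V C X E := by
  induction h2 with
  | refl => exact h1
  | del v hv h ih => exact Minor.del v hv ih
  | con v hv h ih => exact Minor.con v hv ih

/-- d = 1 helper: the complex of subsets of `W` missing some element of `B`. -/
lemma kdec_missing (n : ℕ) : ∀ (B W : Finset ι), B.card ≤ n → B ⊆ W →
    KDecomposable 0 {σ : Finset ι | σ ⊆ W ∧ ∃ x ∈ B, x ∉ σ} := by
  induction n with
  | zero =>
    intro B W hB _
    have : B = ∅ := Finset.card_eq_zero.mp (Nat.le_zero.mp hB)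
    subst this
    convert KDecomposable.of_empty (ι := ι) 0 using 1
    ext σ; simp
  | succ n ih =>
    intro B W hB hBW
    rcases B.eq_empty_or_nonempty with rfl | ⟨b, hb⟩
    · convert KDecomposable.of_empty (ι := ι) 0 using 1
      ext σ; simp
    rcases (B.erase b).eq_empty_or_nonempty with hE | ⟨c, hc⟩
    · -- B = {b}
      have hBb : B = {b} := by
        apply Finset.eq_singleton_iff_unique_mem.mpr
        exact ⟨hb, fun x hx => by
          by_contra hne
          exact (Finset.notMem_empty x) (hE ▸ Finset.mem_erase.mpr ⟨hne, hx⟩)⟩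
      subst hBb
      convert KDecomposable.of_simplex (ι := ι) 0 (W.erase b) using 1
      ext σ
      simp only [Set.mem_setOf_eq, Finset.mem_singleton]
      constructor
      · rintro ⟨hσW, x, rfl, hx⟩
        exact fun y hy => Finset.mem_erase.mpr ⟨fun h => hx (h ▸ hy), hσW hy⟩
      · intro h
        refine ⟨fun y hy => (Finset.mem_erase.mp (h hy)).2, b, rfl,
          fun hbσ => (Finset.mem_erase.mp (h hbσ)).1 rfl⟩
    · -- |B| ≥ 2, shed at {b}
      obtain ⟨hcb, hcB⟩ := Finset.mem_erase.mp hc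
      refine KDecomposable.of_shed 0 _ {b} ?_ ⟨b, Finset.mem_singleton_self b⟩ (by simp) ?_ ?_ ?_
      · exact ⟨Finset.singleton_subset_iff.mpr (hBW hb), c, hcB, by simp [hcb]⟩
      · -- shedding
        rintro τ ⟨hτW, x, hxB, hxτ⟩ hbτ v hv
        rw [Finset.mem_singleton] at hv; subst hv
        have hxb : x ≠ v := fun h => hxτ (h ▸ hbτ (Finset.mem_singleton_self v))
        refine ⟨x, hxτ, ?_, v, ?_, by simp⟩
        · intro y hy
          rcases Finset.mem_insert.mp (Finset.mem_of_mem_erase hy) with rfl | h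
          · exact hBW hxB
          · exact hτW h
        · exact hb
      · -- deletion = simplex on W.erase b
        convert KDecomposable.of_simplex (ι := ι) 0 (W.erase b) using 1
        ext σ
        simp only [delFace, Set.mem_setOf_eq, Finset.singleton_subset_iff]
        constructor
        · rintro ⟨⟨hσW, _⟩, hbσ⟩ y hy
          exact Finset.mem_erase.mpr ⟨fun h => hbσ (h ▸ hy), hσW hy⟩
        · intro h
          exact ⟨⟨fun y hy => (Finset.mem_erase.mp (h hy)).2, b, hb,
            fun hbσ => (Finset.mem_erase.mp (h hbσ)).1 rfl⟩,
            fun hbσ => (Finset.mem_erase.mp (h hbσ)).1 rfl⟩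
      · -- link
        have heq : link {σ : Finset ι | σ ⊆ W ∧ ∃ x ∈ B, x ∉ σ} {b}
            = {σ : Finset ι | σ ⊆ W.erase b ∧ ∃ x ∈ B.erase b, x ∉ σ} := by
          ext τ
          simp only [link, Set.mem_setOf_eq, Finset.disjoint_singleton_right]
          constructor
          · rintro ⟨hbτ, hsub, x, hxB, hx⟩
            have hxb : x ≠ b := fun h => hx (by simp [h])
            refine ⟨fun y hy => Finset.mem_erase.mpr ⟨fun h => hbτ (h ▸ hy),
              hsub (Finset.mem_union_left _ hy)⟩, x, Finset.mem_erase.mpr ⟨hxb, hxB⟩,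
              fun hxτ => hx (Finset.mem_union_left _ hxτ)⟩
          · rintro ⟨hτ, x, hxBe, hx⟩
            obtain ⟨hxb, hxB⟩ := Finset.mem_erase.mp hxBe
            refine ⟨fun h => (Finset.mem_erase.mp (hτ h)).1 rfl, ?_, x, hxB, ?_⟩
            · intro y hy
              rcases Finset.mem_union.mp hy with h | h
              · exact (Finset.mem_erase.mp (hτ h)).2
              · exact (Finset.mem_singleton.mp h) ▸ hBW hb
            · intro h
              rcases Finset.mem_union.mp h with h | h
              · exact hx h
              · exact hxb (Finset.mem_singleton.mp h)
        rw [heq]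
        exact ih (B.erase b) (W.erase b)
          (by have := Finset.card_erase_of_mem hb; omega)
          (Finset.erase_subset_erase b hBW)
/-- Key claim: if `v` is simplicial, `e` a `d`-non-circuit avoiding `v` (`d ≥ 2`), then some
`insert v (e.erase w)` is a non-circuit. -/
lemma claimC1 {D : Set (Finset ι)} {d : ℕ} {v : ι} {e : Finset ι}
    (hD : ∀ c ∈ D, d ≤ c.card) (hsv : SimplicialVertex D v)
    (hd2 : 2 ≤ d) (hve : v ∉ e) (hec : e.card = d) (heD : e ∉ D) :
    ∃ w ∈ e, insert v (e.erase w) ∉ D := by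
  by_contra h
  push_neg at h
  obtain ⟨a, ha, b, hbmem, hab⟩ := Finset.one_lt_card.mp (by omega : 1 < e.card)
  have hca := h a ha
  have hcb := h b hbmem
  have hva : v ∉ e.erase a := fun hx => hve (Finset.mem_of_mem_erase hx)
  have hvb : v ∉ e.erase b := fun hx => hve (Finset.mem_of_mem_erase hx)
  have hne : insert v (e.erase a) ≠ insert v (e.erase b) := by
    intro hEq
    have h2 : e.erase a = e.erase b := by
      have := congrArg (fun s => Finset.erase s v) hEq
      simpa [Finset.erase_insert hva, Finset.erase_insert hvb] using this
    have hbin : b ∈ e.erase a := Finset.mem_erase.mpr ⟨fun h' => hab h'.symm, hbmem⟩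
    rw [h2] at hbin
    exact (Finset.mem_erase.mp hbin).1 rfl
  obtain ⟨e₃, he₃, hsub⟩ := hsv _ hca _ hcb hne (Finset.mem_insert_self _ _)
    (Finset.mem_insert_self _ _)
  have hsube : e₃ ⊆ e := by
    intro x hx
    obtain ⟨hxv, hx'⟩ := Finset.mem_erase.mp (hsub hx)
    rcases Finset.mem_union.mp hx' with h' | h' <;>
      rcases Finset.mem_insert.mp h' with rfl | h''
    · exact absurd rfl hxv
    · exact Finset.mem_of_mem_erase h''
    · exact absurd rfl hxv
    · exact Finset.mem_of_mem_erase h''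
  have : e₃ = e := Finset.eq_of_subset_of_card_le hsube (by have := hD e₃ he₃; omega)
  exact heD (this ▸ he₃)

lemma claimC2 {D : Set (Finset ι)} {d : ℕ} {v : ι} {f : Finset ι}
    (hD : ∀ c ∈ D, d + 2 ≤ c.card) (hfc : f.card = d + 1) (hvf : v ∉ f)
    (hf : f ∈ clCon D v) : insert v f ∈ D := by
  obtain ⟨⟨c, hc, hcf⟩, -⟩ := hf
  have hsub : c ⊆ insert v f := by
    intro x hx
    by_cases hxv : x = v
    · exact hxv ▸ Finset.mem_insert_self v f
    · exact Finset.mem_insert_of_mem (hcf ▸ Finset.mem_erase.mpr ⟨hxv, hx⟩)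
  have : c = insert v f := Finset.eq_of_subset_of_card_le hsub
    (by rw [Finset.card_insert_of_notMem hvf, hfc]; exact hD c hc)
  exact this ▸ hc

lemma claimC3 {D : Set (Finset ι)} {d : ℕ} {v : ι} {f : Finset ι}
    (hD : ∀ c ∈ D, d + 2 ≤ c.card) (hfc : f.card = d + 1) (hvf : v ∉ f)
    (h : insert v f ∈ D) : f ∈ clCon D v := by
  refine ⟨⟨insert v f, h, Finset.erase_insert hvf⟩, ?_⟩
  rintro g ⟨c, hc, rfl⟩ hgf
  have hsub : c ⊆ insert v f := by
    intro x hx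
    by_cases hxv : x = v
    · exact hxv ▸ Finset.mem_insert_self v f
    · exact Finset.mem_insert_of_mem (hgf (Finset.mem_erase.mpr ⟨hxv, hx⟩))
  have hce : c = insert v f := Finset.eq_of_subset_of_card_le hsub
    (by rw [Finset.card_insert_of_notMem hvf, hfc]; exact hD c hc)
  rw [hce]
  exact Finset.erase_insert hvf

lemma SC_link {W : Finset ι} {D : Set (Finset ι)} {d : ℕ} {v : ι} (hvW : v ∈ W) :
    link (SC W D d) {v} = SC (W.erase v) (clDel D v) d := by
  ext τ
  simp only [link, SC, Set.mem_setOf_eq, Finset.disjoint_singleton_right]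
  constructor
  · rintro ⟨hvτ, hsub, e, heW, hec, heD⟩
    refine ⟨fun y hy => Finset.mem_erase.mpr ⟨fun h => hvτ (h ▸ hy),
      hsub (Finset.mem_union_left _ hy)⟩, e, ?_, hec, fun h => heD h.1⟩
    intro x hx
    obtain ⟨hxW, hxn⟩ := Finset.mem_sdiff.mp (heW hx)
    exact Finset.mem_sdiff.mpr ⟨Finset.mem_erase.mpr ⟨fun h => hxn (by simp [h]), hxW⟩,
      fun h => hxn (Finset.mem_union_left _ h)⟩
  · rintro ⟨hτ, e, heW, hec, heD⟩
    have hve : v ∉ e := fun h => (Finset.mem_erase.mp (Finset.mem_sdiff.mp (heW h)).1).1 rfl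
    have heD' : e ∉ D := fun h => heD ⟨h, hve⟩
    refine ⟨fun h => (Finset.mem_erase.mp (hτ h)).1 rfl, ?_, e, ?_, hec, heD'⟩
    · intro y hy
      rcases Finset.mem_union.mp hy with h | h
      · exact (Finset.mem_erase.mp (hτ h)).2
      · exact (Finset.mem_singleton.mp h) ▸ hvW
    · intro x hx
      obtain ⟨hxWe, hxτ⟩ := Finset.mem_sdiff.mp (heW hx)
      obtain ⟨hxv, hxW⟩ := Finset.mem_erase.mp hxWe
      refine Finset.mem_sdiff.mpr ⟨hxW, fun h => ?_⟩
      rcases Finset.mem_union.mp h with h' | h'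
      · exact hxτ h'
      · exact hxv (Finset.mem_singleton.mp h')

lemma SC_del {W : Finset ι} {D : Set (Finset ι)} {d : ℕ} {v : ι} (hvW : v ∈ W)
    (hD : ∀ c ∈ D, d + 2 ≤ c.card) (hsv : SimplicialVertex D v) :
    delFace (SC W D (d + 2)) {v} = SC (W.erase v) (clCon D v) (d + 1) := by
  ext σ
  simp only [delFace, SC, Set.mem_setOf_eq, Finset.singleton_subset_iff]
  constructor
  · rintro ⟨⟨hσW, e, heW, hec, heD⟩, hvσ⟩
    have hσ' : σ ⊆ W.erase v := fun y hy => Finset.mem_erase.mpr ⟨fun h => hvσ (h ▸ hy), hσW hy⟩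
    by_cases hve : v ∈ e
    · refine ⟨hσ', e.erase v, ?_,
        by have := Finset.card_erase_of_mem hve; omega, ?_⟩
      · intro x hx
        obtain ⟨hxv, hxe⟩ := Finset.mem_erase.mp hx
        obtain ⟨hxW, hxσ⟩ := Finset.mem_sdiff.mp (heW hxe)
        exact Finset.mem_sdiff.mpr ⟨Finset.mem_erase.mpr ⟨hxv, hxW⟩, hxσ⟩
      · intro hmem
        have hvf : v ∉ e.erase v := Finset.notMem_erase v e
        have h2 := claimC2 hD (by have := Finset.card_erase_of_mem hve; omega) hvf hmem
        rw [Finset.insert_erase hve] at h2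
        exact heD h2
    · obtain ⟨w, hw, hwD⟩ := claimC1 hD hsv (by omega) hve hec heD
      have hvf : v ∉ e.erase w := fun h => hve (Finset.mem_of_mem_erase h)
      refine ⟨hσ', e.erase w, ?_,
        by have := Finset.card_erase_of_mem hw; omega, ?_⟩
      · intro x hx
        have hxe := Finset.mem_of_mem_erase hx
        obtain ⟨hxW, hxσ⟩ := Finset.mem_sdiff.mp (heW hxe)
        exact Finset.mem_sdiff.mpr ⟨Finset.mem_erase.mpr ⟨fun h => hve (h ▸ hxe), hxW⟩, hxσ⟩
      · intro hmem
        exact hwD (claimC2 hD (by have := Finset.card_erase_of_mem hw; omega) hvf hmem)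
  · rintro ⟨hσ, f, hf, hfc, hfC⟩
    have hvσ : v ∉ σ := fun h => (Finset.mem_erase.mp (hσ h)).1 rfl
    have hvf : v ∉ f := fun h => (Finset.mem_erase.mp (Finset.mem_sdiff.mp (hf h)).1).1 rfl
    have hins : insert v f ∉ D := fun h => hfC (claimC3 hD hfc hvf h)
    refine ⟨⟨fun y hy => Finset.mem_of_mem_erase (hσ hy), insert v f, ?_,
      by have := Finset.card_insert_of_notMem hvf; omega, hins⟩, hvσ⟩
    intro x hx
    rcases Finset.mem_insert.mp hx with rfl | h
    · exact Finset.mem_sdiff.mpr ⟨hvW, hvσ⟩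
    · obtain ⟨hxWe, hxσ⟩ := Finset.mem_sdiff.mp (hf h)
      exact Finset.mem_sdiff.mpr ⟨Finset.mem_of_mem_erase hxWe, hxσ⟩

lemma SC_shed {W : Finset ι} {D : Set (Finset ι)} {d : ℕ} {v : ι}
    (hD : ∀ c ∈ D, d + 2 ≤ c.card) (hsv : SimplicialVertex D v) :
    SheddingFace (SC W D (d + 2)) {v} := by
  rintro τ ⟨hτW, e, heW, hec, heD⟩ hvτ u hu
  obtain rfl := Finset.mem_singleton.mp hu
  have hvmem : u ∈ τ := hvτ (Finset.mem_singleton_self u)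
  have hve : u ∉ e := fun h => (Finset.mem_sdiff.mp (heW h)).2 hvmem
  obtain ⟨w, hw, hwD⟩ := claimC1 hD hsv (by omega) hve hec heD
  have hwτ : w ∉ τ := (Finset.mem_sdiff.mp (heW hw)).2
  have hwW : w ∈ W := (Finset.mem_sdiff.mp (heW hw)).1
  have hvf : u ∉ e.erase w := fun h => hve (Finset.mem_of_mem_erase h)
  refine ⟨w, hwτ, ?_, insert u (e.erase w), ?_,
    by have h1 := Finset.card_insert_of_notMem hvf;
       have h2 := Finset.card_erase_of_mem hw; omega, hwD⟩
  · intro y hy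
    rcases Finset.mem_insert.mp (Finset.mem_of_mem_erase hy) with rfl | h
    · exact hwW
    · exact hτW h
  · intro x hx
    refine Finset.mem_sdiff.mpr ?_
    rcases Finset.mem_insert.mp hx with rfl | h
    · exact ⟨hτW hvmem, Finset.notMem_erase x _⟩
    · have hxe := Finset.mem_of_mem_erase h
      have hxW := (Finset.mem_sdiff.mp (heW hxe)).1
      have hxτ := (Finset.mem_sdiff.mp (heW hxe)).2
      refine ⟨hxW, fun hc => ?_⟩
      rcases Finset.mem_insert.mp (Finset.mem_of_mem_erase hc) with rfl | h'
      · exact (Finset.mem_erase.mp h).1 rfl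
      · exact hxτ h'
lemma SC_zero (W : Finset ι) (D : Set (Finset ι)) : KDecomposable 0 (SC W D 0) := by
  by_cases h : (∅ : Finset ι) ∈ D
  · convert KDecomposable.of_empty (ι := ι) 0 using 1
    ext σ
    simp only [SC, Set.mem_setOf_eq, Set.mem_empty_iff_false, iff_false, not_and]
    rintro - ⟨e, -, hec, heD⟩
    exact heD (Finset.card_eq_zero.mp hec ▸ h)
  · convert KDecomposable.of_simplex (ι := ι) 0 W using 1
    ext σ
    simp only [SC, Set.mem_setOf_eq]
    exact ⟨fun ⟨h1, _⟩ => h1, fun h1 => ⟨h1, ∅, by simp, rfl, h⟩⟩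

lemma SC_one (W : Finset ι) (D : Set (Finset ι)) : KDecomposable 0 (SC W D 1) := by
  classical
  have h := kdec_missing (W.filter fun x => ({x} : Finset ι) ∉ D).card
    (W.filter fun x => ({x} : Finset ι) ∉ D) W le_rfl (Finset.filter_subset _ _)
  convert h using 1
  ext σ
  simp only [SC, Set.mem_setOf_eq, Finset.mem_filter]
  constructor
  · rintro ⟨hσW, e, heW, hec, heD⟩
    obtain ⟨x, rfl⟩ := Finset.card_eq_one.mp hec
    obtain ⟨hxW, hxσ⟩ := Finset.mem_sdiff.mp (Finset.singleton_subset_iff.mp heW)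
    exact ⟨hσW, x, ⟨hxW, heD⟩, hxσ⟩
  · rintro ⟨hσW, x, ⟨hxW, hxD⟩, hxσ⟩
    exact ⟨hσW, {x}, Finset.singleton_subset_iff.mpr (Finset.mem_sdiff.mpr ⟨hxW, hxσ⟩),
      Finset.card_singleton x, hxD⟩

lemma kdec_SC (n : ℕ) : ∀ (W : Finset ι) (D : Set (Finset ι)) (d : ℕ), W.card ≤ n →
    (∀ c ∈ D, d ≤ c.card) →
    (∀ W' D', Minor W D W' D' → W'.Nonempty → ∃ v ∈ W', SimplicialVertex D' v) →
    KDecomposable 0 (SC W D d) := by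
  induction n with
  | zero =>
    intro W D d hW hD hch
    have hWe : W = ∅ := Finset.card_eq_zero.mp (Nat.le_zero.mp hW)
    subst hWe
    rcases d with - | d
    · exact SC_zero ∅ D
    · convert KDecomposable.of_empty (ι := ι) 0 using 1
      ext σ
      simp only [SC, Set.mem_setOf_eq, Set.mem_empty_iff_false, iff_false, not_and]
      rintro - ⟨e, heW, hec, -⟩
      have he : e = ∅ := Finset.subset_empty.mp (heW.trans (Finset.sdiff_subset))
      simp [he] at hec
  | succ n ih =>
    intro W D d hW hD hch
    rcases d with - | - | d
    · exact SC_zero W D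
    · exact SC_one W D
    · show KDecomposable 0 (SC W D (d + 2))
      rcases W.eq_empty_or_nonempty with rfl | hWne
      · convert KDecomposable.of_empty (ι := ι) 0 using 1
        ext σ
        simp only [SC, Set.mem_setOf_eq, Set.mem_empty_iff_false, iff_false, not_and]
        rintro - ⟨e, heW, hec, -⟩
        have he : e = ∅ := Finset.subset_empty.mp (heW.trans (Finset.sdiff_subset))
        simp [he] at hec
      · obtain ⟨v, hvW, hsv⟩ := hch W D (Minor.refl W D) hWne
        have hD' : ∀ c ∈ D, d + 2 ≤ c.card := hD
        have hcard : (W.erase v).card ≤ n := by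
          have h1 := Finset.card_erase_of_mem hvW
          have h2 := Finset.card_pos.mpr hWne
          omega
        have hchDel : ∀ W' D', Minor (W.erase v) (clDel D v) W' D' → W'.Nonempty →
            ∃ u ∈ W', SimplicialVertex D' u :=
          fun W' D' hm => hch W' D' (minor_trans (Minor.del v hvW (Minor.refl W D)) hm)
        have hchCon : ∀ W' D', Minor (W.erase v) (clCon D v) W' D' → W'.Nonempty →
            ∃ u ∈ W', SimplicialVertex D' u :=
          fun W' D' hm => hch W' D' (minor_trans (Minor.con v hvW (Minor.refl W D)) hm)
        have hDdel : ∀ c ∈ clDel D v, d + 2 ≤ c.card := fun c hc => hD' c hc.1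
        have hDcon : ∀ c ∈ clCon D v, d + 1 ≤ c.card := by
          rintro c ⟨⟨c', hc', rfl⟩, -⟩
          have h1 := hD' c' hc'
          have h2 : c'.card - 1 ≤ (c'.erase v).card := Finset.pred_card_le_card_erase
          simpa using by omega
        have hdel := ih (W.erase v) (clCon D v) (d + 1) hcard hDcon hchCon
        have hlink := ih (W.erase v) (clDel D v) (d + 2) hcard hDdel hchDel
        by_cases hb : ({v} : Finset ι) ∈ SC W D (d + 2)
        · refine KDecomposable.of_shed 0 _ {v} hb ⟨v, Finset.mem_singleton_self v⟩
            (by simp) (SC_shed hD' hsv) ?_ ?_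
          · rw [SC_del hvW hD' hsv]; exact hdel
          · rw [SC_link hvW]; exact hlink
        · have heq : SC W D (d + 2) = delFace (SC W D (d + 2)) {v} := by
            ext σ
            simp only [delFace, Set.mem_setOf_eq, Finset.singleton_subset_iff]
            refine ⟨fun hσ => ⟨hσ, fun hvσ => ?_⟩, fun h => h.1⟩
            obtain ⟨hσW, e, heW, hec, heD⟩ := hσ
            refine hb ⟨Finset.singleton_subset_iff.mpr hvW, e, ?_, hec, heD⟩
            intro x hx
            obtain ⟨hxW, hxσ⟩ := Finset.mem_sdiff.mp (heW hx)
            refine Finset.mem_sdiff.mpr ⟨hxW, fun h => hxσ ?_⟩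
            rw [Finset.mem_singleton.mp h]
            exact hvσ
          rw [heq, SC_del hvW hD' hsv]
          exact hdel


/-- if `C` is a chordal clutter with minimum circuit cardinality
`d`, then `I(c_d(C))^∨` is vertex decomposable. -/
theorem stmt18 [Fintype ι] (V : Finset ι) (C : Set (Finset ι)) (hC : IsClutter C)
    (hCV : ∀ e ∈ C, e ⊆ V) (hch : Chordal V C) (d : ℕ)
    (hmin : ∀ e ∈ C, d ≤ e.card) (hex : ∃ e ∈ C, e.card = d) :
    KDecomposable 0 (alexDual V (indepOn V (cNon V C d))) := by
  have heq : alexDual V (indepOn V (cNon V C d)) = SC V C d := by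
    ext σ
    simp only [alexDual, indepOn, cNon, SC, Set.mem_setOf_eq]
    constructor
    · rintro ⟨hσV, h⟩
      refine ⟨hσV, ?_⟩
      by_contra hno
      push_neg at hno
      refine h ⟨Finset.sdiff_subset, ?_⟩
      rintro e ⟨heV, hec, heC⟩ hsub
      exact heC (hno e hsub hec)
    · rintro ⟨hσV, e, hsub, hec, heC⟩
      exact ⟨hσV, fun hind => hind.2 e ⟨hsub.trans Finset.sdiff_subset, hec, heC⟩ hsub⟩
  rw [heq]
  exact kdec_SC V.card V C d le_rfl hmin hch
end

section
/- The cyclic k-uniform clutter Z_n^k on vertex set Z/nZ, whose circuits are all sets of k consecutive elements, has a simplicial vertex if and only if k = n or k = n−1 (for 2 ≤ k ≤ n). -/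
variable {ι : Type*} [DecidableEq ι]

/-- The arc of `k` consecutive elements of `ZMod n` starting at `i`. -/
private def arc (n k : ℕ) (i : ZMod n) : Finset (ZMod n) :=
  (Finset.range k).image (fun j : ℕ => i + (j : ZMod n))

private lemma sub_val_eq {n : ℕ} [NeZero n] {x y : ZMod n} {s : ℕ}
    (h : x - y = (s : ZMod n)) (hs : s < n) : (x - y).val = s := by
  rw [h, ZMod.val_natCast, Nat.mod_eq_of_lt hs]

private lemma mem_arc {n k : ℕ} [NeZero n] (hkn : k ≤ n) (i x : ZMod n) :
    x ∈ arc n k i ↔ (x - i).val < k := by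
  simp only [arc, Finset.mem_image, Finset.mem_range]
  constructor
  · rintro ⟨j, hj, rfl⟩
    have h : i + (j : ZMod n) - i = (j : ZMod n) := by ring
    rw [h, ZMod.val_natCast]
    exact lt_of_le_of_lt (Nat.mod_le _ _) hj
  · intro h
    refine ⟨(x - i).val, h, ?_⟩
    rw [ZMod.natCast_val, ZMod.cast_id]; ring

private lemma arc_card {n k : ℕ} [NeZero n] (hkn : k ≤ n) (i : ZMod n) :
    (arc n k i).card = k := by
  rw [arc, Finset.card_image_of_injOn, Finset.card_range]
  intro j₁ h₁ j₂ h₂ h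
  simp only [Finset.coe_range, Set.mem_Iio] at h₁ h₂
  have : (j₁ : ZMod n) = (j₂ : ZMod n) := by
    have := add_left_cancel h
    exact this
  have := congrArg ZMod.val this
  rwa [ZMod.val_natCast, ZMod.val_natCast, Nat.mod_eq_of_lt (lt_of_lt_of_le h₁ hkn),
    Nat.mod_eq_of_lt (lt_of_lt_of_le h₂ hkn)] at this

private lemma neg_one_val {n : ℕ} (hn : 2 ≤ n) : (-1 : ZMod n).val = n - 1 := by
  haveI : NeZero n := ⟨by omega⟩
  have h : ((n - 1 : ℕ) : ZMod n) = -1 := by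
    have h1 : ((n - 1 : ℕ) : ZMod n) + 1 = 0 := by
      have h2 : ((n - 1 : ℕ) : ZMod n) + ((1 : ℕ) : ZMod n) = ((n : ℕ) : ZMod n) := by
        rw [← Nat.cast_add]; congr 1; omega
      rw [Nat.cast_one, ZMod.natCast_self] at h2
      exact h2
    linear_combination h1
  rw [← h, ZMod.val_natCast, Nat.mod_eq_of_lt (by omega)]

/-- the cyclic `k`-uniform clutter `Z_n^k` (circuits: all `k`
consecutive elements of `ℤ/nℤ`, `2 ≤ k ≤ n`) has a simplicial vertex iff
`k = n` or `k = n - 1`. -/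
theorem stmt19 (n k : ℕ) (hk : 2 ≤ k) (hkn : k ≤ n) :
    (∃ v : ZMod n, SimplicialVertex
        {e : Finset (ZMod n) |
          ∃ i : ZMod n, e = (Finset.range k).image (fun j : ℕ => i + (j : ZMod n))} v)
      ↔ (k = n ∨ k = n - 1) := by
  have hn : 2 ≤ n := le_trans hk hkn
  haveI : NeZero n := ⟨by omega⟩
  show (∃ v : ZMod n, SimplicialVertex {e | ∃ i : ZMod n, e = arc n k i} v) ↔ _
  constructor
  · rintro ⟨v, hv⟩
    by_contra hcon
    push_neg at hcon
    have hk2 : k + 2 ≤ n := by omega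
    -- the two circuits arc v and arc (v-1)
    have hne : arc n k v ≠ arc n k (v - 1) := by
      intro h
      have h1 : v - 1 ∈ arc n k (v - 1) := by
        rw [mem_arc hkn]
        simp [ZMod.val_zero]; omega
      rw [← h, mem_arc hkn] at h1
      have : (v - 1 - v) = (-1 : ZMod n) := by ring
      rw [this, neg_one_val hn] at h1
      omega
    have hv1 : v ∈ arc n k v := by
      rw [mem_arc hkn]; simp [ZMod.val_zero]; omega
    have hv2 : v ∈ arc n k (v - 1) := by
      rw [mem_arc hkn]
      have : v - (v - 1) = (1 : ZMod n) := by ring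
      rw [this, ZMod.val_one_eq_one_mod, Nat.mod_eq_of_lt (by omega)]
      omega
    obtain ⟨e₃, ⟨a, rfl⟩, hsub⟩ :=
      hv (arc n k v) ⟨v, rfl⟩ (arc n k (v - 1)) ⟨v - 1, rfl⟩ hne hv1 hv2
    set s := (a - v).val with hs
    have hs_lt : s < n := ZMod.val_lt _
    have hcast : a - v = (s : ZMod n) := by
      rw [hs, ZMod.natCast_val, ZMod.cast_id]
    -- a ≠ v, so s ≥ 1
    have ha : a ∈ arc n k a := by
      rw [mem_arc hkn]; simp [ZMod.val_zero]; omega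
    have hs1 : 1 ≤ s := by
      have := Finset.mem_erase.1 (hsub ha) |>.1
      rcases Nat.eq_zero_or_pos s with h0 | h0
      · exfalso; apply this
        have : a - v = 0 := by rw [hcast, h0]; simp
        have := sub_eq_zero.1 this
        exact this
      · exact h0
    -- v ∉ arc a, so s + k ≤ n
    have hsk : s + k ≤ n := by
      have hv3 : v ∉ arc n k a := fun h => (Finset.notMem_erase v _) (hsub h)
      rw [mem_arc hkn] at hv3
      have hva : v - a = ((n - s : ℕ) : ZMod n) := by
        have : ((n - s : ℕ) : ZMod n) + (s : ZMod n) = 0 := by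
          rw [← Nat.cast_add]
          have : n - s + s = n := by omega
          rw [this, ZMod.natCast_self]
        rw [← hcast] at this
        linear_combination -this
      rw [sub_val_eq hva (by omega)] at hv3
      omega
    -- the element a + (k-1) forces s = n - k
    have key : ∀ j : ℕ, j < k →
        (s + j) % n < k ∨ (s + j + 1) % n < k := by
      intro j hj
      have hmem : a + ((j : ℕ) : ZMod n) ∈ arc n k a := by
        rw [mem_arc hkn]
        have h : a + (j : ZMod n) - a = ((j : ℕ) : ZMod n) := by ring
        rw [h, ZMod.val_natCast]
        exact lt_of_le_of_lt (Nat.mod_le _ _) hj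
      have := Finset.mem_erase.1 (hsub hmem) |>.2
      rw [Finset.mem_union, mem_arc hkn, mem_arc hkn] at this
      have e1 : a + (j : ZMod n) - v = ((s + j : ℕ) : ZMod n) := by
        push_cast
        rw [← hcast]; ring
      have e2 : a + (j : ZMod n) - (v - 1) = ((s + j + 1 : ℕ) : ZMod n) := by
        push_cast
        rw [← hcast]; ring
      rw [e1, e2, ZMod.val_natCast, ZMod.val_natCast] at this
      exact this
    have hseq : s = n - k := by
      have h1 := key (k - 1) (by omega)
      have e1 : s + (k - 1) = s + k - 1 := by omega
      have e2 : s + k - 1 + 1 = s + k := by omega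
      rw [e1, e2] at h1
      rw [Nat.mod_eq_of_lt (by omega)] at h1
      rcases h1 with h1 | h1
      · omega
      · rcases Nat.lt_or_ge (s + k) n with h2 | h2
        · rw [Nat.mod_eq_of_lt h2] at h1; omega
        · omega
    have h2 := key (k - 2) (by omega)
    have e1 : s + (k - 2) = n - 2 := by omega
    have e2 : n - 2 + 1 = n - 1 := by omega
    rw [e1, e2, Nat.mod_eq_of_lt (by omega), Nat.mod_eq_of_lt (by omega)] at h2
    omega
  · intro h
    refine ⟨0, ?_⟩
    rintro e₁ ⟨i₁, rfl⟩ e₂ ⟨i₂, rfl⟩ hne h1 h2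
    rcases h with rfl | hk1
    · -- k = n : all circuits are equal, contradiction
      exfalso
      apply hne
      have huniv : ∀ i : ZMod k, arc k k i = Finset.univ := fun i =>
        Finset.eq_univ_of_card _ (by rw [arc_card le_rfl, ZMod.card])
      rw [huniv, huniv]
    · -- k = n - 1
      refine ⟨arc n k 1, ⟨1, rfl⟩, ?_⟩
      have hcard : (arc n k i₁).card = k := arc_card hkn _
      have hcard2 : (arc n k i₂).card = k := arc_card hkn _
      have hssub : arc n k i₁ ⊂ arc n k i₁ ∪ arc n k i₂ := by
        refine ⟨Finset.subset_union_left, fun hsub => ?_⟩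
        apply hne
        have h21 : arc n k i₂ ⊆ arc n k i₁ :=
          fun x hx => hsub (Finset.mem_union_right _ hx)
        exact (Finset.eq_of_subset_of_card_le h21 (le_of_eq (hcard.trans hcard2.symm))).symm
      have hucard : n ≤ (arc n k i₁ ∪ arc n k i₂).card := by
        have := Finset.card_lt_card hssub
        have hle := Finset.card_le_univ (arc n k i₁ ∪ arc n k i₂)
        rw [ZMod.card] at hle
        omega
      have huniv : arc n k i₁ ∪ arc n k i₂ = Finset.univ := by
        apply Finset.eq_univ_of_card
        have hle := Finset.card_le_univ (arc n k i₁ ∪ arc n k i₂)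
        rw [ZMod.card] at hle ⊢
        omega
      rw [huniv]
      intro x hx
      rw [Finset.mem_erase]
      refine ⟨?_, Finset.mem_univ x⟩
      rintro rfl
      rw [mem_arc hkn] at hx
      have e : (0 : ZMod n) - 1 = -1 := by ring
      rw [e, neg_one_val hn] at hx
      omega
end
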